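/- Let X be a complete smooth vector field on M with flow F, Y a complete smooth vector field on N with flow G, and h₀ : M → N smooth. Define h(ε, x) = G^{−ε}(h₀(F^ε(x))). Then the ε-derivative satisfies h'(ε,x) = T_{h₀(F^ε(x))} G^{−ε} · (T h₀ ∘ X − Y ∘ h₀)(F^ε(x)) for all ε, x. -/

import Mathlib

open Set

/-- Uniqueness of global solutions to an autonomous ODE with smooth right-hand side. -/
lemma flow_unique' {N : Type*} [NormedAddCommGroup N] [NormedSpace ℝ N]
    {Y : N → N} (hY : ContDiff ℝ (⊤ : ℕ∞) Y) {f g : ℝ → N}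
    (hf : ∀ t, HasDerivAt f (Y (f t)) t) (hg : ∀ t, HasDerivAt g (Y (g t)) t)
    (h0 : f 0 = g 0) : f = g := by
  have hset : {t : ℝ | f t = g t} = univ := by
    have hcl : IsClopen {t : ℝ | f t = g t} := by
      refine ⟨isClosed_eq (continuous_iff_continuousAt.2 fun t => (hf t).continuousAt)
        (continuous_iff_continuousAt.2 fun t => (hg t).continuousAt), ?_⟩
      rw [isOpen_iff_mem_nhds]
      intro t₁ ht₁
      obtain ⟨K, u, hu, hlip⟩ :=
        ((hY.of_le (by simp) : ContDiff ℝ 1 Y).contDiffAt (x := f t₁)).exists_lipschitzOnWith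
      have hfu : ∀ᶠ t in nhds t₁, HasDerivAt f (Y (f t)) t ∧ f t ∈ u := by
        filter_upwards [(hf t₁).continuousAt.preimage_mem_nhds hu] with t ht
        exact ⟨hf t, ht⟩
      have hgu : ∀ᶠ t in nhds t₁, HasDerivAt g (Y (g t)) t ∧ g t ∈ u := by
        have hu' : u ∈ nhds (g t₁) := by rwa [← ht₁]
        filter_upwards [(hg t₁).continuousAt.preimage_mem_nhds hu'] with t ht
        exact ⟨hg t, ht⟩
      have := ODE_solution_unique_of_eventually (v := fun _ => Y) (s := fun _ => u)
        (Filter.Eventually.of_forall fun _ => hlip) hfu hgu ht₁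
      exact this
    exact hcl.eq_univ ⟨0, h0⟩
  have : ∀ t, f t = g t := fun t => by
    have := hset ▸ (mem_univ t)
    exact this
  funext t; exact this t

/- The ε-derivative of h(ε,x) = G^{−ε}(h₀(F^ε(x))) equals
   T G^{−ε} · (T h₀ ∘ X − Y ∘ h₀)(F^ε(x)). -/
theorem stmt13 {E N : Type*} [NormedAddCommGroup E] [NormedSpace ℝ E] [CompleteSpace E]
    [NormedAddCommGroup N] [NormedSpace ℝ N] [CompleteSpace N]
    (X : E → E) (Y : N → N) (h₀ : E → N)
    (hX : ContDiff ℝ (⊤ : ℕ∞) X) (hY : ContDiff ℝ (⊤ : ℕ∞) Y) (hh₀ : ContDiff ℝ (⊤ : ℕ∞) h₀)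
    (F : ℝ × E → E) (G : ℝ × N → N)
    (hF : ContDiff ℝ (⊤ : ℕ∞) F) (hG : ContDiff ℝ (⊤ : ℕ∞) G)
    (hFode : ∀ (ε : ℝ) (x : E), deriv (fun s => F (s, x)) ε = X (F (ε, x)))
    (hGode : ∀ (ε : ℝ) (y : N), deriv (fun s => G (s, y)) ε = Y (G (ε, y)))
    (hFinit : ∀ x : E, F (0, x) = x) (hGinit : ∀ y : N, G (0, y) = y)
    (ε : ℝ) (x : E) :
    deriv (fun s => G (-s, h₀ (F (s, x)))) ε =
      fderiv ℝ (fun y => G (-ε, y)) (h₀ (F (ε, x)))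
        (fderiv ℝ h₀ (F (ε, x)) (X (F (ε, x))) - Y (h₀ (F (ε, x)))) := by
  -- basic differentiability facts
  have hGdiff : Differentiable ℝ G := hG.differentiable (by simp)
  have hFdiff : Differentiable ℝ F := hF.differentiable (by simp)
  have hh₀diff : Differentiable ℝ h₀ := hh₀.differentiable (by simp)
  -- time derivative of the flow G
  have hGd : ∀ (c : ℝ) (y : N), HasDerivAt (fun s => G (s, y)) (Y (G (c, y))) c := by
    intro c y
    have hdiff : DifferentiableAt ℝ (fun s : ℝ => G (s, y)) c :=
      (hGdiff (c, y)).comp c ((differentiableAt_fun_id).prodMk (differentiableAt_const y))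
    have := hdiff.hasDerivAt
    rwa [hGode c y] at this
  have hFd : ∀ (c : ℝ) (z : E), HasDerivAt (fun s => F (s, z)) (X (F (c, z))) c := by
    intro c z
    have hdiff : DifferentiableAt ℝ (fun s : ℝ => F (s, z)) c :=
      (hFdiff (c, z)).comp c ((differentiableAt_fun_id).prodMk (differentiableAt_const z))
    have := hdiff.hasDerivAt
    rwa [hFode c z] at this
  -- semigroup property of G
  have hsemi : ∀ (t s : ℝ) (y : N), G (s + t, y) = G (s, G (t, y)) := by
    intro t s y
    have key : (fun s => G (s + t, y)) = fun s => G (s, G (t, y)) := by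
      apply flow_unique' hY
      · intro s
        have h1 : HasDerivAt (fun s : ℝ => s + t) 1 s := (hasDerivAt_id s).add_const t
        have := (hGd (s + t) y).scomp s h1
        simpa [Function.comp_def] using this
      · intro s; exact hGd s (G (t, y))
      · simp [hGinit]
    exact congrFun key s
  -- the key identity: the flow pushes Y forward to itself
  have hkey : ∀ (c : ℝ) (y₀ : N),
      fderiv ℝ (fun y => G (c, y)) y₀ (Y y₀) = Y (G (c, y₀)) := by
    intro c y₀
    have hφ : DifferentiableAt ℝ (fun y => G (c, y)) y₀ :=
      (hGdiff (c, y₀)).comp y₀ ((differentiableAt_const c).prodMk differentiableAt_fun_id)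
    -- curve t ↦ G (t, y₀) has derivative Y y₀ at 0
    have hcurve : HasDerivAt (fun t => G (t, y₀)) (Y y₀) 0 := by
      have := hGd 0 y₀; rwa [hGinit y₀] at this
    have hcomp : HasDerivAt (fun t => G (c, G (t, y₀)))
        (fderiv ℝ (fun y => G (c, y)) y₀ (Y y₀)) 0 :=
      HasFDerivAt.comp_hasDerivAt_of_eq (x := (0:ℝ)) hφ.hasFDerivAt hcurve (hGinit y₀).symm
    have heqfun : (fun t => G (c, G (t, y₀))) = fun t => G (t + c, y₀) := by
      funext t; rw [← hsemi t c y₀, add_comm]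
    rw [heqfun] at hcomp
    have hcomp2 : HasDerivAt (fun t => G (t + c, y₀)) (Y (G (c, y₀))) 0 := by
      have h1 : HasDerivAt (fun t : ℝ => t + c) 1 0 := (hasDerivAt_id 0).add_const c
      have := (hGd (0 + c) y₀).scomp 0 h1
      simpa [Function.comp_def] using this
    exact hcomp.unique hcomp2
  set z := F (ε, x) with hz
  set y₀ := h₀ z with hy₀
  set b := fderiv ℝ h₀ z (X z) with hb
  -- derivative of the curve s ↦ (-s, h₀ (F (s, x)))
  have hinner : HasDerivAt (fun s => h₀ (F (s, x))) b ε :=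
    (hh₀diff z).hasFDerivAt.comp_hasDerivAt ε (hFd ε x)
  have hγ : HasDerivAt (fun s => ((-s : ℝ), h₀ (F (s, x)))) ((-1 : ℝ), b) ε :=
    ((hasDerivAt_id ε).neg).prodMk hinner
  have hmain : HasDerivAt (fun s => G (-s, h₀ (F (s, x))))
      (fderiv ℝ G (-ε, y₀) ((-1 : ℝ), b)) ε :=
    (hGdiff ((-ε : ℝ), y₀)).hasFDerivAt.comp_hasDerivAt ε hγ
  rw [hmain.deriv]
  -- split the full derivative into partial derivatives
  have hpart2 : ∀ (w : N), fderiv ℝ G (-ε, y₀) ((0 : ℝ), w)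
      = fderiv ℝ (fun y => G (-ε, y)) y₀ w := by
    intro w
    have hι : HasFDerivAt (fun y : N => ((-ε : ℝ), y))
        (ContinuousLinearMap.inr ℝ ℝ N) y₀ := hasFDerivAt_prodMk_right (-ε : ℝ) y₀
    have := ((hGdiff ((-ε : ℝ), y₀)).hasFDerivAt.comp y₀ hι).fderiv
    rw [show (fun y : N => G (-ε, y)) = G ∘ Prod.mk (-ε : ℝ) from rfl, this]
    rfl
  have hpart1 : fderiv ℝ G (-ε, y₀) ((1 : ℝ), 0) = Y (G (-ε, y₀)) := by
    have hι : HasDerivAt (fun s : ℝ => (s, y₀)) ((1 : ℝ), 0) (-ε) :=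
      (hasDerivAt_id (-ε)).prodMk (hasDerivAt_const _ _)
    have hc : HasDerivAt (fun s : ℝ => G (s, y₀))
        (fderiv ℝ G (-ε, y₀) ((1 : ℝ), 0)) (-ε) :=
      (hGdiff ((-ε : ℝ), y₀)).hasFDerivAt.comp_hasDerivAt (-ε) hι
    exact hc.unique (hGd (-ε) y₀)
  have hsplit : ((-1 : ℝ), b) = ((0 : ℝ), b) - ((1 : ℝ), 0) := by
    simp [Prod.ext_iff]
  rw [hsplit, map_sub, hpart1, hpart2, map_sub, hkey (-ε) y₀]
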